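/- arXiv:2512.05569 — 2 statements merged into one kernel-verified Lean document; each statement's English description precedes it below -/
import Mathlib

section
/- Let X be a proper geodesic metric space, let D > 0, let Y ⊆ X be a nonempty closed D-contracting subset, and let g be an isometry of X with g(Y) = Y. Then inf_{x∈X} d(x, gx) ≤ inf_{y∈Y} d(y, gy) ≤ inf_{x∈X} d(x, gx) + 4D. -/
/-- `c : [a,b] → X` is a geodesic. -/
def IsGeodesic {X : Type*} [MetricSpace X] (c : ℝ → X) (a b : ℝ) : Prop :=
  a ≤ b ∧ ∀ s ∈ Set.Icc a b, ∀ t ∈ Set.Icc a b, dist (c s) (c t) = |s - t|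

/-- Every two points are joined by a geodesic. -/
def GeodesicSpace (X : Type*) [MetricSpace X] : Prop :=
  ∀ x y : X, ∃ (a b : ℝ) (c : ℝ → X), IsGeodesic c a b ∧ c a = x ∧ c b = y

/-- The set of projections of the point `x` onto `Y`. -/
def projSet {X : Type*} [MetricSpace X] (Y : Set X) (x : X) : Set X :=
  {p | p ∈ Y ∧ dist x p = Metric.infDist x Y}

/-- `Π_Y(Z)`: the set of projections onto `Y` of points of `Z`. -/
def projOn {X : Type*} [MetricSpace X] (Y Z : Set X) : Set X :=
  ⋃ z ∈ Z, projSet Y z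

/-- The `A`-neighborhood `Y^{+A}` of `Y`. -/
def nbhd {X : Type*} [MetricSpace X] (Y : Set X) (A : ℝ) : Set X :=
  {x | Metric.infDist x Y ≤ A}

/-- `Y` is `D`-contracting: the projection onto `Y` of any geodesic staying at
distance at least `D` from `Y` has diameter at most `D`. -/
def IsContracting {X : Type*} [MetricSpace X] (D : ℝ) (Y : Set X) : Prop :=
  ∀ (c : ℝ → X) (a b : ℝ), IsGeodesic c a b →
    (∀ t ∈ Set.Icc a b, D ≤ Metric.infDist (c t) Y) →
    EMetric.diam (projOn Y (c '' Set.Icc a b)) ≤ ENNReal.ofReal D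


/-!
Projection onto a `D`-contracting set is coarsely `1`-Lipschitz along geodesics: on a geodesic
from `x` to `y`, let `t₁`, `t₂` be the first and last times at which it comes within `D` of `Y`.
The subpaths before `t₁` and after `t₂` stay `D`-far from `Y`, so contraction puts the projections
of `x` and `y` within `2D` of `c t₁` and `c t₂`, whence `d(π x, π y) ≤ d(x, y) + 4D`. An isometry
preserving `Y` maps a projection of `x` to a projection of `g x`, so every displacement
`d(x, g x)` is matched, up to `4D`, by the displacement of a point of `Y`.
-/

open Set Metric

section

variable {X : Type*} [MetricSpace X]

namespace IsGeodesic

variable {c : ℝ → X} {a b : ℝ}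

lemma dist_endpoints (hc : IsGeodesic c a b) : dist (c a) (c b) = b - a := by
  rw [hc.2 a (left_mem_Icc.2 hc.1) b (right_mem_Icc.2 hc.1), abs_sub_comm,
    abs_of_nonneg (sub_nonneg.2 hc.1)]

lemma mono (hc : IsGeodesic c a b) {a' b' : ℝ} (hab' : a' ≤ b') (h : Icc a' b' ⊆ Icc a b) :
    IsGeodesic c a' b' :=
  ⟨hab', fun s hs t ht => hc.2 s (h hs) t (h ht)⟩

lemma comp_neg (hc : IsGeodesic c a b) : IsGeodesic (fun t => c (-t)) (-b) (-a) := by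
  refine ⟨neg_le_neg hc.1, fun s hs t ht => ?_⟩
  rw [hc.2 (-s) (neg_mem_Icc_iff.2 hs) (-t) (neg_mem_Icc_iff.2 ht), neg_sub_neg, abs_sub_comm]

lemma continuousOn (hc : IsGeodesic c a b) : ContinuousOn c (Icc a b) :=
  (LipschitzOnWith.of_dist_le_mul (K := 1) fun s hs t ht => by
    rw [hc.2 s hs t ht, NNReal.coe_one, one_mul, Real.dist_eq]).continuousOn

end IsGeodesic

lemma projSet_nonempty [ProperSpace X] {Y : Set X} (hYne : Y.Nonempty) (hYcl : IsClosed Y)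
    (x : X) : (projSet Y x).Nonempty := by
  obtain ⟨y, hy, hd⟩ := hYcl.exists_infDist_eq_dist hYne x
  exact ⟨y, hy, hd.symm⟩

lemma IsometryEquiv.mem_projSet {Y : Set X} (g : X ≃ᵢ X) (hgY : g '' Y = Y) {x p : X}
    (hp : p ∈ projSet Y x) : g p ∈ projSet Y (g x) := by
  refine ⟨hgY ▸ mem_image_of_mem g hp.1, ?_⟩
  rw [g.dist_eq, hp.2]
  conv_rhs => rw [← hgY, infDist_image g.isometry]

namespace IsContracting

variable {D : ℝ} {Y : Set X} {c : ℝ → X} {a b : ℝ}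

lemma dist_le_of_forall_le_infDist (hD : 0 ≤ D) (hY : IsContracting D Y)
    (hc : IsGeodesic c a b) (hfar : ∀ t ∈ Icc a b, D ≤ infDist (c t) Y)
    {s t : ℝ} (hs : s ∈ Icc a b) (ht : t ∈ Icc a b) {p q : X}
    (hp : p ∈ projSet Y (c s)) (hq : q ∈ projSet Y (c t)) : dist p q ≤ D := by
  rw [← edist_le_ofReal hD]
  refine (edist_le_ediam_of_mem ?_ ?_).trans (hY c a b hc hfar)
  · exact mem_biUnion (mem_image_of_mem c hs) hp
  · exact mem_biUnion (mem_image_of_mem c ht) hq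

lemma exists_dist_le_two_mul [ProperSpace X] (hD : 0 ≤ D) (hYne : Y.Nonempty)
    (hYcl : IsClosed Y) (hY : IsContracting D Y) (hc : IsGeodesic c a b)
    (hnear : ∃ t ∈ Icc a b, infDist (c t) Y ≤ D) {p : X} (hp : p ∈ projSet Y (c a)) :
    ∃ s ∈ Icc a b, dist p (c s) ≤ 2 * D := by
  set f : ℝ → ℝ := fun t => infDist (c t) Y
  have hf : ContinuousOn f (Icc a b) :=
    (continuous_infDist_pt Y).comp_continuousOn hc.continuousOn
  set T := Icc a b ∩ f ⁻¹' Iic D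
  have hT : IsClosed T := hf.preimage_isClosed_of_isClosed isClosed_Icc isClosed_Iic
  have hT₁ : sInf T ∈ T := hT.csInf_mem hnear ⟨a, fun t ht => ht.1.1⟩
  obtain ⟨⟨ha₁, h₁b⟩, hf₁⟩ := hT₁
  rcases ha₁.eq_or_lt with h | ha₁
  · refine ⟨a, left_mem_Icc.2 hc.1, ?_⟩
    rw [dist_comm, hp.2, h]
    linarith [show f (sInf T) ≤ D from hf₁]
  -- Before the first entrance time `sInf T` the geodesic is `D`-far from `Y`; by closedness so
  -- is the closed interval up to it.
  have hfar : ∀ t ∈ Icc a (sInf T), D ≤ f t := by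
    have hIco : Ico a (sInf T) ⊆ Icc a b ∩ f ⁻¹' Ici D := by
      intro t ht
      have htab : t ∈ Icc a b := ⟨ht.1, ht.2.le.trans h₁b⟩
      refine ⟨htab, show D ≤ f t from le_of_not_ge fun hle => ?_⟩
      exact (csInf_le (s := T) ⟨a, fun u hu => hu.1.1⟩ ⟨htab, hle⟩).not_gt ht.2
    have hcl := closure_minimal hIco
      (hf.preimage_isClosed_of_isClosed isClosed_Icc isClosed_Ici)
    rw [closure_Ico ha₁.ne] at hcl
    exact fun t ht => (hcl ht).2
  obtain ⟨q, hq⟩ := projSet_nonempty hYne hYcl (c (sInf T))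
  have hpq : dist p q ≤ D :=
    hY.dist_le_of_forall_le_infDist hD (hc.mono ha₁.le (Icc_subset_Icc_right h₁b)) hfar
      (left_mem_Icc.2 ha₁.le) (right_mem_Icc.2 ha₁.le) hp hq
  refine ⟨sInf T, ⟨ha₁.le, h₁b⟩, ?_⟩
  calc dist p (c (sInf T)) ≤ dist p q + dist q (c (sInf T)) := dist_triangle _ _ _
    _ ≤ D + D := by gcongr; rw [dist_comm, hq.2]; exact hf₁
    _ = 2 * D := by ring

lemma dist_projSet_le [ProperSpace X] (hX : GeodesicSpace X) (hD : 0 ≤ D)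
    (hYne : Y.Nonempty) (hYcl : IsClosed Y) (hY : IsContracting D Y) {x y p q : X}
    (hp : p ∈ projSet Y x) (hq : q ∈ projSet Y y) : dist p q ≤ dist x y + 4 * D := by
  obtain ⟨a, b, c, hc, rfl, rfl⟩ := hX x y
  by_cases hnear : ∃ t ∈ Icc a b, infDist (c t) Y ≤ D
  · obtain ⟨s, hs, hps⟩ := hY.exists_dist_le_two_mul hD hYne hYcl hc hnear hp
    have hnear_neg : ∃ t ∈ Icc (-b) (-a), infDist (c (-t)) Y ≤ D := by
      obtain ⟨t, ht, htD⟩ := hnear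
      exact ⟨-t, by rwa [neg_mem_Icc_iff, neg_neg, neg_neg], by rwa [neg_neg]⟩
    obtain ⟨s', hs', hqs'⟩ := hY.exists_dist_le_two_mul hD hYne hYcl hc.comp_neg hnear_neg
      (by simpa only [neg_neg] using hq)
    have hs'' : -s' ∈ Icc a b := neg_mem_Icc_iff.2 hs'
    calc dist p q ≤ dist p (c s) + dist (c s) (c (-s')) + dist (c (-s')) q :=
          dist_triangle4 _ _ _ _
      _ ≤ 2 * D + (b - a) + 2 * D := by
          rw [hc.2 s hs _ hs'', dist_comm _ q]
          gcongr
          exact abs_sub_le_of_le_of_le hs.1 hs.2 hs''.1 hs''.2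
      _ = dist (c a) (c b) + 4 * D := by rw [hc.dist_endpoints]; ring
  · push Not at hnear
    have hpq := hY.dist_le_of_forall_le_infDist hD hc (fun t ht => (hnear t ht).le)
      (left_mem_Icc.2 hc.1) (right_mem_Icc.2 hc.1) hp hq
    linarith [dist_nonneg (x := c a) (y := c b)]

end IsContracting

end

theorem stmt14 {X : Type*} [MetricSpace X] [ProperSpace X] (hX : GeodesicSpace X)
    (D : ℝ) (hD : 0 < D) (Y : Set X) (hYne : Y.Nonempty) (hYcl : IsClosed Y)
    (hY : IsContracting D Y) (g : X ≃ᵢ X) (hgY : g '' Y = Y) :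
    (⨅ x : X, dist x (g x)) ≤ (⨅ y : Y, dist (y : X) (g y)) ∧
    (⨅ y : Y, dist (y : X) (g y)) ≤ (⨅ x : X, dist x (g x)) + 4 * D := by
  have : Nonempty Y := hYne.to_subtype
  have : Nonempty X := hYne.to_subtype.map Subtype.val
  have hbdd : BddBelow (range fun y : Y => dist (y : X) (g y)) :=
    ⟨0, forall_mem_range.2 fun _ => dist_nonneg⟩
  refine ⟨le_ciInf fun y => ciInf_le ⟨0, forall_mem_range.2 fun _ => dist_nonneg⟩ (y : X),
    le_ciInf_add fun x => ?_⟩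
  obtain ⟨p, hp⟩ := projSet_nonempty hYne hYcl x
  calc (⨅ y : Y, dist (y : X) (g y)) ≤ dist p (g p) := ciInf_le hbdd ⟨p, hp.1⟩
    _ ≤ dist x (g x) + 4 * D :=
        hY.dist_projSet_le hX hD.le hYne hYcl hp (g.mem_projSet hgY hp)
end

section
/- Let G be a group generated by a finite set S, with word length |·|, let φ ∈ Aut(G), and let g, h ∈ G. For n ∈ ℕ set w_n = L_n(φ,g) · L_n(φ,h)⁻¹. Let k ≥ 1, d ∈ ℕ and λ ≥ 1. If |w_{kn}| ≍ n^d λ^n (as a function of n), then |w_n| ≍ n^d (λ^{1/k})^n. -/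
/-- `f(n) ≍ n^d λ^n`. -/
def GrowsLike (f : ℕ → ℝ) (d : ℕ) (lam : ℝ) : Prop :=
  ∃ C : ℝ, 0 < C ∧ ∀ n : ℕ, 1 ≤ n →
    (1 / C) * (n : ℝ) ^ d * lam ^ n - C ≤ f n ∧ f n ≤ C * (n : ℝ) ^ d * lam ^ n + C

/-- Word length of `g` with respect to `S ∪ S⁻¹`. -/
noncomputable def wLen {G : Type*} [Group G] (S : Finset G) (g : G) : ℕ :=
  sInf {n | ∃ l : List G, l.length = n ∧ (∀ x ∈ l, x ∈ S ∨ x⁻¹ ∈ S) ∧ l.prod = g}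

/-- Left palangre: `L_n(φ,g) = g·φ(g)·φ²(g)⋯φ^{n−1}(g)`. -/
def Lpal {G : Type*} [Group G] (φ : MulAut G) (g : G) : ℕ → G
  | 0 => 1
  | n + 1 => Lpal φ g n * (φ ^ n) g

section helpers
variable {G : Type*} [Group G] (S : Finset G)

lemma wLen_le {g : G} {l : List G} (hl : ∀ x ∈ l, x ∈ S ∨ x⁻¹ ∈ S) (hp : l.prod = g) :
    wLen S g ≤ l.length := Nat.sInf_le ⟨l, rfl, hl, hp⟩

lemma exists_rep (hS : Subgroup.closure (S : Set G) = ⊤) (g : G) :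
    ∃ l : List G, (∀ x ∈ l, x ∈ S ∨ x⁻¹ ∈ S) ∧ l.prod = g := by
  have hg : g ∈ Subgroup.closure (S : Set G) := hS ▸ Subgroup.mem_top g
  induction hg using Subgroup.closure_induction with
  | mem x hx => exact ⟨[x], by simpa using Or.inl hx, by simp⟩
  | one => exact ⟨[], by simp, by simp⟩
  | mul x y _ _ hx hy =>
      obtain ⟨l1, h1, hp1⟩ := hx; obtain ⟨l2, h2, hp2⟩ := hy
      exact ⟨l1 ++ l2, by
        intro z hz; rcases List.mem_append.mp hz with hz | hz
        exacts [h1 z hz, h2 z hz], by simp [hp1, hp2]⟩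
  | inv x _ hx =>
      obtain ⟨l, h1, hp1⟩ := hx
      refine ⟨(l.map (·⁻¹)).reverse, ?_, ?_⟩
      · intro z hz
        simp only [List.mem_reverse, List.mem_map] at hz
        obtain ⟨y, hy, rfl⟩ := hz
        rcases h1 y hy with hh | hh
        · exact Or.inr (by simpa using hh)
        · exact Or.inl hh
      · rw [← List.prod_inv_reverse, hp1]

lemma wLen_spec (hS : Subgroup.closure (S : Set G) = ⊤) (g : G) :
    ∃ l : List G, l.length = wLen S g ∧ (∀ x ∈ l, x ∈ S ∨ x⁻¹ ∈ S) ∧ l.prod = g := by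
  have hne : {n | ∃ l : List G, l.length = n ∧ (∀ x ∈ l, x ∈ S ∨ x⁻¹ ∈ S) ∧ l.prod = g}.Nonempty := by
    obtain ⟨l, h1, h2⟩ := exists_rep S hS g
    exact ⟨l.length, l, rfl, h1, h2⟩
  exact Nat.sInf_mem hne

lemma wLen_one : wLen S (1 : G) = 0 :=
  Nat.le_zero.mp (wLen_le S (l := []) (by simp) (by simp))

lemma wLen_mul_le (hS : Subgroup.closure (S : Set G) = ⊤) (x y : G) :
    wLen S (x * y) ≤ wLen S x + wLen S y := by
  obtain ⟨l1, hl1, hm1, hp1⟩ := wLen_spec S hS x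
  obtain ⟨l2, hl2, hm2, hp2⟩ := wLen_spec S hS y
  have := wLen_le S (g := x * y) (l := l1 ++ l2) (by
    intro z hz; rcases List.mem_append.mp hz with hz | hz
    exacts [hm1 z hz, hm2 z hz]) (by simp [hp1, hp2])
  simpa [hl1, hl2] using this

lemma wLen_inv_le (hS : Subgroup.closure (S : Set G) = ⊤) (x : G) :
    wLen S x⁻¹ ≤ wLen S x := by
  obtain ⟨l, hl, hm, hp⟩ := wLen_spec S hS x
  have := wLen_le S (l := (l.map (·⁻¹)).reverse) (by
    intro z hz
    simp only [List.mem_reverse, List.mem_map] at hz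
    obtain ⟨y, hy, rfl⟩ := hz
    rcases hm y hy with hh | hh
    · exact Or.inr (by simpa using hh)
    · exact Or.inl hh) (by rw [← List.prod_inv_reverse, hp])
  simpa [hl] using this

lemma wLen_lipschitz (hS : Subgroup.closure (S : Set G) = ⊤) (ψ : MulAut G) :
    ∃ K : ℕ, ∀ x : G, wLen S (ψ x) ≤ K * wLen S x := by
  classical
  set K := S.sup (fun s => wLen S (ψ s)) with hKdef
  have hel : ∀ x : G, (x ∈ S ∨ x⁻¹ ∈ S) → wLen S (ψ x) ≤ K := by
    intro x hx
    rcases hx with hx | hx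
    · exact Finset.le_sup (f := fun s => wLen S (ψ s)) hx
    · have h1 : wLen S (ψ x) = wLen S ((ψ x⁻¹)⁻¹) := by rw [map_inv, inv_inv]
      rw [h1]
      exact le_trans (wLen_inv_le S hS _) (Finset.le_sup (f := fun s => wLen S (ψ s)) hx)
  refine ⟨K, fun x => ?_⟩
  obtain ⟨l, hl, hm, hp⟩ := wLen_spec S hS x
  rw [← hl]
  clear hl
  induction l generalizing x with
  | nil => simp at hp; simp [← hp, wLen_one]
  | cons a t ih =>
      have hp' : ψ x = ψ a * ψ t.prod := by rw [← map_mul]; simp [← hp]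
      rw [hp']
      calc wLen S (ψ a * ψ t.prod) ≤ wLen S (ψ a) + wLen S (ψ t.prod) :=
            wLen_mul_le S hS _ _
        _ ≤ K + K * t.length := by
            have h1 := hel a (hm a (by simp))
            have h2 := ih t.prod (fun z hz => hm z (by simp [hz])) rfl
            omega
        _ = K * (a :: t).length := by simp [Nat.mul_succ, List.length_cons]; ring

lemma Lpal_succ {G : Type*} [Group G] (φ : MulAut G) (g : G) (n : ℕ) :
    Lpal φ g (n + 1) = Lpal φ g n * (φ ^ n) g := rfl

lemma Lpal_add {G : Type*} [Group G] (φ : MulAut G) (g : G) (r m : ℕ) :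
    Lpal φ g (r + m) = Lpal φ g r * (φ ^ r) (Lpal φ g m) := by
  induction m with
  | zero => simp [Lpal]
  | succ m ih =>
      rw [show r + (m + 1) = (r + m) + 1 by ring, Lpal_succ, ih, Lpal_succ,
        map_mul, mul_assoc]
      congr 1
      rw [pow_add, MulAut.mul_apply]

end helpers

set_option maxHeartbeats 800000 in
theorem stmt19 {G : Type*} [Group G] (S : Finset G)
    (hS : Subgroup.closure (S : Set G) = ⊤) (φ : MulAut G) (g h : G)
    (k : ℕ) (hk : 1 ≤ k) (d : ℕ) (lam : ℝ) (hlam : 1 ≤ lam)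
    (hgrow : GrowsLike (fun n => (wLen S (Lpal φ g (k * n) * (Lpal φ h (k * n))⁻¹) : ℝ)) d lam) :
    GrowsLike (fun n => (wLen S (Lpal φ g n * (Lpal φ h n)⁻¹) : ℝ)) d
      (lam ^ ((1 : ℝ) / k)) := by
  classical
  obtain ⟨C, hC, hf⟩ := hgrow
  set W : G → ℕ := wLen S with hWdef
  set w : ℕ → G := fun n => Lpal φ g n * (Lpal φ h n)⁻¹ with hwdef
  have hf' : ∀ n : ℕ, 1 ≤ n →
      (1 / C) * (n : ℝ) ^ d * lam ^ n - C ≤ (W (w (k * n)) : ℝ) ∧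
      (W (w (k * n)) : ℝ) ≤ C * (n : ℝ) ^ d * lam ^ n + C := fun n hn => hf n hn
  -- Lipschitz constant for φ and φ⁻¹
  obtain ⟨K₁, hK₁⟩ := wLen_lipschitz S hS φ
  obtain ⟨K₂, hK₂⟩ := wLen_lipschitz S hS φ⁻¹
  set K : ℕ := K₁ + K₂ + 1 with hKdef
  have hK1 : 1 ≤ K := by omega
  have hKφ : ∀ x, W (φ x) ≤ K * W x := fun x =>
    le_trans (hK₁ x) (Nat.mul_le_mul_right _ (by omega))
  have hKφi : ∀ x, W (φ⁻¹ x) ≤ K * W x := fun x =>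
    le_trans (hK₂ x) (Nat.mul_le_mul_right _ (by omega))
  have hpow : ∀ (r : ℕ) (x : G), W ((φ ^ r) x) ≤ K ^ r * W x := by
    intro r
    induction r with
    | zero => intro x; simp
    | succ r ih =>
        intro x
        have he : (φ ^ (r + 1)) x = (φ ^ r) (φ x) := by
          rw [pow_succ, MulAut.mul_apply]
        rw [he]
        calc W ((φ ^ r) (φ x)) ≤ K ^ r * W (φ x) := ih _
          _ ≤ K ^ r * (K * W x) := Nat.mul_le_mul_left _ (hKφ x)
          _ = K ^ (r + 1) * W x := by ring
  have hpow' : ∀ (r : ℕ) (x : G), W x ≤ K ^ r * W ((φ ^ r) x) := by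
    intro r
    induction r with
    | zero => intro x; simp
    | succ r ih =>
        intro x
        have he : (φ ^ (r + 1)) x = (φ ^ r) (φ x) := by
          rw [pow_succ, MulAut.mul_apply]
        have h1 : W x ≤ K * W (φ x) := by
          have h2 := hKφi (φ x)
          have h3 : (φ⁻¹) (φ x) = x := by
            rw [← MulAut.mul_apply, inv_mul_cancel, MulAut.one_apply]
          rwa [h3] at h2
        calc W x ≤ K * W (φ x) := h1
          _ ≤ K * (K ^ r * W ((φ ^ r) (φ x))) := Nat.mul_le_mul_left _ (ih (φ x))
          _ = K ^ (r + 1) * W ((φ ^ (r + 1)) x) := by rw [he]; ring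
  -- decomposition of w
  have hdecomp : ∀ r m : ℕ, w (r + m) = Lpal φ g r * ((φ ^ r) (w m) * (Lpal φ h r)⁻¹) := by
    intro r m
    simp only [hwdef]
    rw [Lpal_add, Lpal_add, map_mul, map_inv]
    group
  have hWmul : ∀ x y : G, W (x * y) ≤ W x + W y := wLen_mul_le S hS
  -- constants
  set B : ℕ := (Finset.range k).sup (fun r =>
      W (Lpal φ g r) + W ((Lpal φ h r)⁻¹) + W ((Lpal φ g r)⁻¹) + W (Lpal φ h r)) with hBdef
  set A : ℕ := K ^ k with hAdef
  have hA1 : 1 ≤ A := Nat.one_le_pow _ _ (by omega)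
  have hBr : ∀ r : ℕ, r < k →
      W (Lpal φ g r) + W ((Lpal φ h r)⁻¹) + W ((Lpal φ g r)⁻¹) + W (Lpal φ h r) ≤ B :=
    fun r hr => Finset.le_sup (f := fun r =>
      W (Lpal φ g r) + W ((Lpal φ h r)⁻¹) + W ((Lpal φ g r)⁻¹) + W (Lpal φ h r))
      (Finset.mem_range.mpr hr)
  have hKrA : ∀ r : ℕ, r < k → K ^ r ≤ A := fun r hr =>
    Nat.pow_le_pow_right hK1 hr.le
  -- the two comparison inequalities
  have hup : ∀ n : ℕ, W (w n) ≤ A * W (w (k * (n / k))) + B := by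
    intro n
    have hrk : n % k < k := Nat.mod_lt _ (by omega)
    have hn : n % k + k * (n / k) = n := Nat.mod_add_div n k
    have hd := hdecomp (n % k) (k * (n / k))
    rw [hn] at hd
    rw [hd]
    calc W (Lpal φ g (n % k) * ((φ ^ (n % k)) (w (k * (n / k))) * (Lpal φ h (n % k))⁻¹))
        ≤ W (Lpal φ g (n % k)) + (W ((φ ^ (n % k)) (w (k * (n / k)))) + W ((Lpal φ h (n % k))⁻¹)) :=
          le_trans (hWmul _ _) (by
            have := hWmul ((φ ^ (n % k)) (w (k * (n / k)))) (Lpal φ h (n % k))⁻¹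
            omega)
      _ ≤ A * W (w (k * (n / k))) + B := by
          have h1 := hpow (n % k) (w (k * (n / k)))
          have h2 := Nat.mul_le_mul_right (W (w (k * (n / k)))) (hKrA _ hrk)
          have h3 := hBr _ hrk
          omega
  have hdown : ∀ n : ℕ, W (w (k * (n / k))) ≤ A * W (w n) + A * B := by
    intro n
    have hrk : n % k < k := Nat.mod_lt _ (by omega)
    have hn : n % k + k * (n / k) = n := Nat.mod_add_div n k
    have hd := hdecomp (n % k) (k * (n / k))
    rw [hn] at hd
    have key : (φ ^ (n % k)) (w (k * (n / k))) =
        (Lpal φ g (n % k))⁻¹ * (w n * Lpal φ h (n % k)) := by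
      rw [hd]; group
    have h1 := hpow' (n % k) (w (k * (n / k)))
    rw [key] at h1
    have h2 : W ((Lpal φ g (n % k))⁻¹ * (w n * Lpal φ h (n % k)))
        ≤ W ((Lpal φ g (n % k))⁻¹) + (W (w n) + W (Lpal φ h (n % k))) :=
      le_trans (hWmul _ _) (by
        have := hWmul (w n) (Lpal φ h (n % k))
        omega)
    have h3 := hBr _ hrk
    have h4 : W ((Lpal φ g (n % k))⁻¹) + (W (w n) + W (Lpal φ h (n % k))) ≤ W (w n) + B := by omega
    have h5 : K ^ (n % k) * (W ((Lpal φ g (n % k))⁻¹) + (W (w n) + W (Lpal φ h (n % k))))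
        ≤ A * (W (w n) + B) :=
      Nat.mul_le_mul (hKrA _ hrk) h4
    calc W (w (k * (n / k)))
        ≤ K ^ (n % k) * (W ((Lpal φ g (n % k))⁻¹) + (W (w n) + W (Lpal φ h (n % k)))) :=
          le_trans h1 (Nat.mul_le_mul_left _ h2)
      _ ≤ A * (W (w n) + B) := h5
      _ = A * W (w n) + A * B := by ring
  -- real constants
  set μ : ℝ := lam ^ ((1 : ℝ) / k) with hμdef
  have hlam0 : (0:ℝ) < lam := lt_of_lt_of_le one_pos hlam
  have hkR0 : (k:ℝ) ≠ 0 := Nat.cast_ne_zero.mpr (by omega)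
  have hμ1 : 1 ≤ μ := Real.one_le_rpow hlam (by positivity)
  have hμ0 : (0:ℝ) < μ := lt_of_lt_of_le one_pos hμ1
  have hμk : μ ^ k = lam := by
    rw [hμdef, ← Real.rpow_natCast (lam ^ ((1:ℝ)/k)) k, ← Real.rpow_mul hlam0.le,
      one_div, inv_mul_cancel₀ hkR0, Real.rpow_one]
  set TK : ℝ := ((2 * k : ℕ) : ℝ) ^ d with hTKdef
  have h2k1 : (1:ℝ) ≤ ((2 * k : ℕ) : ℝ) := by exact_mod_cast (by omega : 1 ≤ 2 * k)
  have hTK1 : (1:ℝ) ≤ TK := by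
    calc (1:ℝ) = 1 ^ d := (one_pow d).symm
      _ ≤ ((2 * k : ℕ) : ℝ) ^ d := pow_le_pow_left₀ one_pos.le h2k1 d
  have hTK0 : (0:ℝ) < TK := lt_of_lt_of_le one_pos hTK1
  have hA1R : (1:ℝ) ≤ (A:ℝ) := by exact_mod_cast hA1
  have hA0R : (0:ℝ) ≤ (A:ℝ) := by positivity
  have hB0R : (0:ℝ) ≤ (B:ℝ) := by positivity
  have hμk1 : (1:ℝ) ≤ μ ^ k := one_le_pow₀ hμ1
  have hμ2k1 : (1:ℝ) ≤ μ ^ (2 * k) := one_le_pow₀ hμ1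
  set C' : ℝ := (A:ℝ) * C + (B:ℝ) + (A:ℝ) * C * TK * μ ^ k + (C + (B:ℝ))
      + TK * μ ^ (2 * k) + 1 with hC'def
  have s1 : (0:ℝ) ≤ (A:ℝ) * C := mul_nonneg hA0R hC.le
  have s3 : (0:ℝ) ≤ (A:ℝ) * C * TK * μ ^ k := by positivity
  have s5 : (0:ℝ) ≤ TK * μ ^ (2 * k) := by positivity
  have hC'pos : 0 < C' := by rw [hC'def]; linarith only [s1, s3, s5, hB0R, hC]
  have hC'B : (B:ℝ) ≤ C' := by rw [hC'def]; linarith only [s1, s3, s5, hB0R, hC]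
  have hC'AC : (A:ℝ) * C ≤ C' := by rw [hC'def]; linarith only [s1, s3, s5, hB0R, hC]
  have hC'ACB : (A:ℝ) * C + (B:ℝ) ≤ C' := by rw [hC'def]; linarith only [s1, s3, s5, hB0R, hC]
  have hC'D : (A:ℝ) * C * TK * μ ^ k ≤ C' := by rw [hC'def]; linarith only [s1, s3, s5, hB0R, hC]
  have hC'CB : C + (B:ℝ) ≤ C' := by rw [hC'def]; linarith only [s1, s3, s5, hB0R, hC]
  have hC'E : TK * μ ^ (2 * k) ≤ C' := by rw [hC'def]; linarith only [s1, s3, s5, hB0R, hC]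
  have hC'1 : (1:ℝ) ≤ C' := by rw [hC'def]; linarith only [s1, s3, s5, hB0R, hC]
  clear_value A B K
  clear_value μ TK C'
  refine ⟨C', hC'pos, fun n hn => ⟨?_, ?_⟩⟩
  -- lower bound
  · show 1 / C' * (n:ℝ) ^ d * μ ^ n - C' ≤ (W (w n) : ℝ)
    have hX0 : (0:ℝ) ≤ (n:ℝ) ^ d * μ ^ n := by positivity
    have hFn0 : (0:ℝ) ≤ (W (w n) : ℝ) := Nat.cast_nonneg _
    rcases lt_or_ge n (2 * k) with hn2k | hn2k
    · -- small n: the lower bound is vacuous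
      have hXE : (n:ℝ) ^ d * μ ^ n ≤ TK * μ ^ (2 * k) := by
        rw [hTKdef]
        refine mul_le_mul ?_ ?_ (by positivity) (by positivity)
        · exact pow_le_pow_left₀ (Nat.cast_nonneg n) (by exact_mod_cast hn2k.le) d
        · exact pow_le_pow_right₀ hμ1 hn2k.le
      have h1C' : 1 / C' ≤ 1 := by rw [div_le_one hC'pos]; exact hC'1
      have h2 : 1 / C' * ((n:ℝ) ^ d * μ ^ n) ≤ 1 * ((n:ℝ) ^ d * μ ^ n) :=
        mul_le_mul_of_nonneg_right h1C' hX0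
      linarith only [h2, hXE, hC'E, hFn0]
    · -- large n
      have hq1 : 1 ≤ n / k := (Nat.one_le_div_iff (by omega)).mpr (by omega)
      have hm : k * (n / k) + n % k = n := Nat.div_add_mod n k
      have hrk : n % k < k := Nat.mod_lt _ (by omega)
      have hkn : k ≤ n := by omega
      have hfl := (hf' (n / k) hq1).1
      have hdownR : (W (w (k * (n / k))) : ℝ) ≤ (A:ℝ) * (W (w n) : ℝ) + (A:ℝ) * (B:ℝ) := by
        exact_mod_cast hdown n
      have hmR : (k:ℝ) * ((n / k : ℕ):ℝ) + ((n % k : ℕ):ℝ) = (n:ℝ) := by exact_mod_cast hm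
      have hrkR : ((n % k : ℕ):ℝ) ≤ (k:ℝ) := by exact_mod_cast hrk.le
      have hqhalf : (n:ℝ) / ((2 * k : ℕ):ℝ) ≤ ((n / k : ℕ):ℝ) := by
        rw [div_le_iff₀ (by positivity)]
        have hknR : 2 * (k:ℝ) ≤ (n:ℝ) := by exact_mod_cast hn2k
        push_cast
        linarith only [hmR, hrkR, hknR]
      have hqd : (n:ℝ) ^ d / TK ≤ ((n / k : ℕ):ℝ) ^ d := by
        rw [hTKdef]
        have := pow_le_pow_left₀ (by positivity : (0:ℝ) ≤ (n:ℝ) / ((2 * k : ℕ):ℝ)) hqhalf d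
        rw [div_pow] at this
        exact this
      have hlamq : μ ^ n / μ ^ k ≤ lam ^ (n / k) := by
        rw [← hμk, ← pow_mul]
        have hsub : n - k ≤ k * (n / k) := by omega
        have h1 : μ ^ (n - k) ≤ μ ^ (k * (n / k)) := pow_le_pow_right₀ hμ1 hsub
        have h2 : μ ^ n / μ ^ k = μ ^ (n - k) := by
          rw [div_eq_iff (by positivity : (μ:ℝ) ^ k ≠ 0), ← pow_add,
            Nat.sub_add_cancel hkn]
        rw [h2]; exact h1
      -- combine
      have hprod : (n:ℝ) ^ d / TK * (μ ^ n / μ ^ k) ≤ ((n / k : ℕ):ℝ) ^ d * lam ^ (n / k) :=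
        mul_le_mul hqd hlamq (by positivity) (by positivity)
      have hY : 1 / C * ((n:ℝ) ^ d / TK * (μ ^ n / μ ^ k)) ≤
          1 / C * (((n / k : ℕ):ℝ) ^ d * lam ^ (n / k)) :=
        mul_le_mul_of_nonneg_left hprod (by positivity)
      -- A * Fn ≥ (1/C) * Y - C - A * B
      have hAFn : 1 / C * ((n:ℝ) ^ d / TK * (μ ^ n / μ ^ k)) - C - (A:ℝ) * (B:ℝ)
          ≤ (A:ℝ) * (W (w n) : ℝ) := by
        linarith only [hfl, hdownR, hY]
      have h5 : 1 / C' * ((n:ℝ) ^ d * μ ^ n) ≤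
          ((n:ℝ) ^ d * μ ^ n) / ((A:ℝ) * C * TK * μ ^ k) := by
        rw [one_div, inv_mul_eq_div]
        exact div_le_div_of_nonneg_left hX0 (by positivity) hC'D
      have h6 : (A:ℝ) * (1 / C' * ((n:ℝ) ^ d * μ ^ n)) ≤
          1 / C * ((n:ℝ) ^ d / TK * (μ ^ n / μ ^ k)) := by
        have h61 : (A:ℝ) * (1 / C' * ((n:ℝ) ^ d * μ ^ n)) ≤
            (A:ℝ) * (((n:ℝ) ^ d * μ ^ n) / ((A:ℝ) * C * TK * μ ^ k)) :=
          mul_le_mul_of_nonneg_left h5 hA0R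
        have h62 : (A:ℝ) * (((n:ℝ) ^ d * μ ^ n) / ((A:ℝ) * C * TK * μ ^ k)) =
            1 / C * ((n:ℝ) ^ d / TK * (μ ^ n / μ ^ k)) := by
          have hA0 : (A:ℝ) ≠ 0 := by positivity
          field_simp
        rw [h62] at h61; exact h61
      have h7 : C + (A:ℝ) * (B:ℝ) ≤ (A:ℝ) * C' := by
        have h71 : (A:ℝ) * (C + (B:ℝ)) ≤ (A:ℝ) * C' := mul_le_mul_of_nonneg_left hC'CB hA0R
        have h72 : 1 * C ≤ (A:ℝ) * C := mul_le_mul_of_nonneg_right hA1R hC.le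
        linarith only [h71, h72]
      have hgoal : (A:ℝ) * (1 / C' * (n:ℝ) ^ d * μ ^ n - C') ≤ (A:ℝ) * (W (w n) : ℝ) := by
        linarith only [h6, h7, hAFn]
      exact le_of_mul_le_mul_left hgoal (lt_of_lt_of_le one_pos hA1R)
  -- upper bound
  · show (W (w n) : ℝ) ≤ C' * (n:ℝ) ^ d * μ ^ n + C'
    have hX0 : (0:ℝ) ≤ (n:ℝ) ^ d * μ ^ n := by positivity
    have hupR : (W (w n) : ℝ) ≤ (A:ℝ) * (W (w (k * (n / k))) : ℝ) + (B:ℝ) := by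
      exact_mod_cast hup n
    rcases Nat.eq_zero_or_pos (n / k) with hq0 | hq1
    · -- n < k
      have hw0 : W (w 0) = 0 := by
        have : w 0 = 1 := by simp [hwdef, Lpal]
        rw [this]; exact wLen_one S
      rw [hq0, Nat.mul_zero, hw0] at hupR
      have hC'X : 0 ≤ C' * ((n:ℝ) ^ d * μ ^ n) := mul_nonneg hC'pos.le hX0
      push_cast at hupR
      linarith only [hupR, hC'X, hC'B]
    · -- 1 ≤ q
      have hfu := (hf' (n / k) hq1).2
      have hqn : n / k ≤ n := Nat.div_le_self n k
      have hkq : k * (n / k) ≤ n := Nat.mul_div_le n k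
      have hqdn : ((n / k : ℕ):ℝ) ^ d ≤ (n:ℝ) ^ d :=
        pow_le_pow_left₀ (Nat.cast_nonneg _) (by exact_mod_cast hqn) d
      have hlamq : lam ^ (n / k) ≤ μ ^ n := by
        rw [← hμk, ← pow_mul]
        exact pow_le_pow_right₀ hμ1 hkq
      have e1 : ((n / k : ℕ):ℝ) ^ d * lam ^ (n / k) ≤ (n:ℝ) ^ d * μ ^ n :=
        mul_le_mul hqdn hlamq (by positivity) (by positivity)
      have e2 : (A:ℝ) * C * (((n / k : ℕ):ℝ) ^ d * lam ^ (n / k)) ≤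
          (A:ℝ) * C * ((n:ℝ) ^ d * μ ^ n) := mul_le_mul_of_nonneg_left e1 s1
      have e3 : (A:ℝ) * C * ((n:ℝ) ^ d * μ ^ n) ≤ C' * ((n:ℝ) ^ d * μ ^ n) :=
        mul_le_mul_of_nonneg_right hC'AC hX0
      have e4 : (A:ℝ) * (W (w (k * (n / k))) : ℝ) ≤
          (A:ℝ) * (C * ((n / k : ℕ):ℝ) ^ d * lam ^ (n / k) + C) :=
        mul_le_mul_of_nonneg_left hfu hA0R
      linarith only [hupR, e2, e3, e4, hC'ACB]
end
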